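/- For every z ∈ ℂ with 0 < |z| ≤ r, the function |·|_z on A_r defined by |f|_z := |f(z)|^{log r / log |z|} is a multiplicative seminorm on A_r bounded by ‖·‖_r: |0|_z = 0, |1|_z = 1, |f·g|_z = |f|_z · |g|_z, |f + g|_z ≤ |f|_z + |g|_z, and |f|_z ≤ ‖f‖_r for all f, g ∈ A_r. -/

import Mathlib

/-- The hybrid norm on `ℂ`: `‖z‖_hyb = max {1, |z|}` for `z ≠ 0`, and `‖0‖_hyb = 0`. -/
noncomputable def hybNorm (z : ℂ) : ℝ := if z = 0 then 0 else max 1 (‖z‖)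

/-- `f ∈ A_r`:  a formal Laurent series `f = Σ aₙ tⁿ ∈ ℂ((t))` belongs to `A_r` when
`Σₙ ‖aₙ‖_hyb rⁿ < ∞`. -/
def memAr (r : ℝ) (f : LaurentSeries ℂ) : Prop :=
  Summable (fun n : ℤ => hybNorm (f.coeff n) * r ^ n)

/-- The norm `‖f‖_r = Σₙ ‖aₙ‖_hyb rⁿ` on `A_r`. -/
noncomputable def normAr (r : ℝ) (f : LaurentSeries ℂ) : ℝ :=
  ∑' n : ℤ, hybNorm (f.coeff n) * r ^ n

/-- The evaluation `ev_z(f) = f(z) = Σₙ aₙ zⁿ` of a formal Laurent series at `z ≠ 0`. -/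
noncomputable def evalAr (z : ℂ) (f : LaurentSeries ℂ) : ℂ :=
  ∑' n : ℤ, f.coeff n * z ^ n

/-- The seminorm `|f|_z := |f(z)| ^ (log r / log |z|)`, for `0 < |z| ≤ r`. -/
noncomputable def seminormAt (r : ℝ) (z : ℂ) (f : LaurentSeries ℂ) : ℝ :=
  ‖evalAr z f‖ ^ (Real.log r / Real.log (‖z‖))

/-!
Put `p = log r / log |z| = log_{|z|} r`, so that `0 < p ≤ 1` and `|z| ^ p = r`. Evaluation at `z`
converges absolutely on `A_r` (only finitely many coefficients of negative index are nonzero, and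
`|z| ≤ r` controls the others), so it is a ring homomorphism; this gives `|0|_z = 0`, `|1|_z = 1`
and multiplicativity. Since `t ↦ t ^ p` is subadditive on `[0, ∞)` for `p ≤ 1`, the triangle
inequality follows, and applying the same subadditivity termwise to `Σ |aₙ| |z|ⁿ` gives
`|f(z)| ^ p ≤ Σ |aₙ| ^ p rⁿ ≤ Σ ‖aₙ‖_hyb rⁿ`.
-/

open Real

lemma norm_rpow_le_hybNorm (w : ℂ) {p : ℝ} (hp0 : 0 < p) (hp1 : p ≤ 1) :
    ‖w‖ ^ p ≤ hybNorm w := by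
  rcases eq_or_ne w 0 with rfl | hw
  · simp [hybNorm, zero_rpow hp0.ne']
  rw [hybNorm, if_neg hw]
  rcases le_total ‖w‖ 1 with h | h
  · exact (rpow_le_one (norm_nonneg w) h hp0.le).trans (le_max_left _ _)
  · exact (rpow_le_self_of_one_le h hp1).trans (le_max_right _ _)

lemma norm_le_hybNorm (w : ℂ) : ‖w‖ ≤ hybNorm w := by
  simpa using norm_rpow_le_hybNorm w one_pos le_rfl

lemma hybNorm_nonneg (w : ℂ) : 0 ≤ hybNorm w :=
  (norm_nonneg w).trans (norm_le_hybNorm w)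

lemma Real.rpow_tsum_le_tsum_rpow {ι : Type*} {p : ℝ} (hp0 : 0 < p) (hp1 : p ≤ 1) {u : ι → ℝ}
    (hu : ∀ i, 0 ≤ u i) (hsu : Summable u) (hsup : Summable fun i => u i ^ p) :
    (∑' i, u i) ^ p ≤ ∑' i, u i ^ p := by
  have hfinite (s : Finset ι) : (∑ i ∈ s, u i) ^ p ≤ ∑ i ∈ s, u i ^ p :=
    Finset.le_sum_of_subadditive_on_pred (· ^ p) (0 ≤ ·) (zero_rpow hp0.ne').le
      (fun x y hx hy => rpow_add_le_add_rpow hx hy hp0.le hp1) (fun _ _ => add_nonneg) u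
      fun i _ => hu i
  have hlim := ((continuousAt_rpow_const _ p (Or.inr hp0.le)).tendsto.comp hsu.hasSum)
  exact le_of_tendsto_of_tendsto' hlim hsup.hasSum hfinite

lemma LaurentSeries.hasSum_coeff_mul {R : Type*} [NonUnitalNonAssocSemiring R]
    [TopologicalSpace R] (f g : LaurentSeries R) (n : ℤ) :
    HasSum (fun j => f.coeff (n - j) * g.coeff j) ((f * g).coeff n) := by
  classical
  set t := Finset.antidiagonal f.isPWO_support g.isPWO_support n
  have hinj : Set.InjOn Prod.snd (t : Set (ℤ × ℤ)) := fun x hx y hy hxy => by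
    rw [Finset.mem_coe, Finset.mem_antidiagonal] at hx hy
    exact Prod.ext (by omega) hxy
  have hcoeff : (f * g).coeff n = ∑ j ∈ t.image Prod.snd, f.coeff (n - j) * g.coeff j := by
    rw [HahnSeries.coeff_mul, Finset.sum_image hinj]
    refine Finset.sum_congr rfl fun x hx => ?_
    rw [← (Finset.mem_antidiagonal.1 hx).2.2, add_sub_cancel_right]
  rw [hcoeff]
  refine hasSum_sum_of_ne_finset_zero fun j hj => ?_
  by_contra hne
  exact hj (Finset.mem_image.2 ⟨(n - j, j), Finset.mem_antidiagonal.2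
    ⟨left_ne_zero_of_mul hne, right_ne_zero_of_mul hne, sub_add_cancel n j⟩, rfl⟩)

theorem tsum_mul_tsum_eq_tsum_tsum_sub_mul {R : Type*} [NormedRing R] [CompleteSpace R]
    {F G : ℤ → R} (hF : Summable fun n => ‖F n‖) (hG : Summable fun n => ‖G n‖) :
    (∑' n, F n) * (∑' n, G n) = ∑' n, ∑' j, F (n - j) * G j := by
  let e : ℤ × ℤ ≃ ℤ × ℤ :=
    { toFun := fun p => (p.1 - p.2, p.2)
      invFun := fun p => (p.1 + p.2, p.2)
      left_inv := fun p => by simp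
      right_inv := fun p => by simp }
  have hsum : Summable fun p : ℤ × ℤ => F (p.1 - p.2) * G p.2 :=
    e.summable_iff.2 (summable_mul_of_summable_norm hF hG)
  rw [tsum_mul_tsum_of_summable_norm hF hG, ← hsum.tsum_prod' hsum.prod_factor]
  exact (e.tsum_eq fun p => F p.1 * G p.2).symm

section Evaluation

variable {r : ℝ} {z : ℂ} {f g : LaurentSeries ℂ}

lemma summable_norm_coeff_mul_zpow (hf : memAr r f) (hzr : ‖z‖ ≤ r) :
    Summable fun n : ℤ => ‖f.coeff n * z ^ n‖ := by
  refine .of_norm_bounded_eventually hf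
    ((Set.finite_Ico f.order 0).eventually_cofinite_notMem.mono fun n hn => ?_)
  rw [norm_norm, norm_mul, norm_zpow]
  by_cases hn0 : 0 ≤ n
  · exact mul_le_mul (norm_le_hybNorm _) (zpow_le_zpow_left₀ hn0 (norm_nonneg z) hzr)
      (by positivity) (hybNorm_nonneg _)
  · rw [HahnSeries.coeff_eq_zero_of_lt_order (by simp only [Set.mem_Ico] at hn; omega)]
    simp [hybNorm]

lemma evalAr_zero (z : ℂ) : evalAr z 0 = 0 := by
  simp [evalAr]

lemma evalAr_one (z : ℂ) : evalAr z 1 = 1 := by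
  rw [evalAr, tsum_eq_single 0 fun n hn => by simp [HahnSeries.coeff_one, hn]]
  simp

lemma evalAr_add (hf : memAr r f) (hg : memAr r g) (hzr : ‖z‖ ≤ r) :
    evalAr z (f + g) = evalAr z f + evalAr z g := by
  rw [evalAr, evalAr, evalAr, ← (summable_norm_coeff_mul_zpow hf hzr).of_norm.tsum_add
    (summable_norm_coeff_mul_zpow hg hzr).of_norm]
  simp only [HahnSeries.coeff_add, add_mul]

lemma evalAr_mul (hf : memAr r f) (hg : memAr r g) (hz0 : z ≠ 0) (hzr : ‖z‖ ≤ r) :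
    evalAr z (f * g) = evalAr z f * evalAr z g := by
  rw [evalAr, evalAr, evalAr, tsum_mul_tsum_eq_tsum_tsum_sub_mul
    (summable_norm_coeff_mul_zpow hf hzr) (summable_norm_coeff_mul_zpow hg hzr)]
  refine tsum_congr fun n => ?_
  rw [← ((LaurentSeries.hasSum_coeff_mul f g n).mul_right (z ^ n)).tsum_eq]
  refine tsum_congr fun j => ?_
  rw [mul_mul_mul_comm, ← zpow_add₀ hz0, sub_add_cancel]

lemma rpow_norm_evalAr_le_normAr {p : ℝ} (hp0 : 0 < p) (hp1 : p ≤ 1) (hzp : ‖z‖ ^ p = r)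
    (hf : memAr r f) (hzr : ‖z‖ ≤ r) : ‖evalAr z f‖ ^ p ≤ normAr r f := by
  have hsum := summable_norm_coeff_mul_zpow hf hzr
  have hterm (n : ℤ) : ‖f.coeff n * z ^ n‖ ^ p ≤ hybNorm (f.coeff n) * r ^ n := by
    rw [norm_mul, norm_zpow, mul_rpow (norm_nonneg _) (by positivity), ← rpow_intCast_mul
      (norm_nonneg _), mul_comm (n : ℝ), rpow_mul_intCast (norm_nonneg _), hzp]
    exact mul_le_mul_of_nonneg_right (norm_rpow_le_hybNorm _ hp0 hp1)
      (zpow_nonneg ((norm_nonneg z).trans hzr) n)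
  have hsump : Summable fun n => ‖f.coeff n * z ^ n‖ ^ p :=
    .of_nonneg_of_le (fun n => by positivity) hterm hf
  calc ‖evalAr z f‖ ^ p ≤ (∑' n, ‖f.coeff n * z ^ n‖) ^ p :=
        rpow_le_rpow (norm_nonneg _) (norm_tsum_le_tsum_norm hsum) hp0.le
    _ ≤ ∑' n, ‖f.coeff n * z ^ n‖ ^ p :=
        rpow_tsum_le_tsum_rpow hp0 hp1 (fun n => norm_nonneg _) hsum hsump
    _ ≤ normAr r f := hsump.tsum_le_tsum hterm hf

end Evaluation

/-- For every `z ∈ ℂ` with `0 < |z| ≤ r`, the function `|f|_z = |f(z)|^(log r / log |z|)`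
is a multiplicative seminorm on `A_r` bounded by `‖·‖_r`: `|0|_z = 0`, `|1|_z = 1`,
`|fg|_z = |f|_z·|g|_z`, `|f+g|_z ≤ |f|_z + |g|_z`, and `|f|_z ≤ ‖f‖_r`. -/
theorem seminormAt_is_bounded_mult_seminorm (r : ℝ) (hr0 : 0 < r) (hr1 : r < 1)
    (z : ℂ) (hz0 : z ≠ 0) (hzr : ‖z‖ ≤ r) :
    seminormAt r z 0 = 0 ∧
    seminormAt r z 1 = 1 ∧
    ∀ f g : LaurentSeries ℂ, memAr r f → memAr r g →
      seminormAt r z (f * g) = seminormAt r z f * seminormAt r z g ∧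
      seminormAt r z (f + g) ≤ seminormAt r z f + seminormAt r z g ∧
      seminormAt r z f ≤ normAr r f := by
  have hz : 0 < ‖z‖ := norm_pos_iff.2 hz0
  have hz1 : ‖z‖ < 1 := hzr.trans_lt hr1
  have hseminorm (f : LaurentSeries ℂ) : seminormAt r z f = ‖evalAr z f‖ ^ logb ‖z‖ r := rfl
  have hp0 : 0 < logb ‖z‖ r := logb_pos_of_base_lt_one hz hz1 hr0 hr1
  have hp1 : logb ‖z‖ r ≤ 1 :=
    (logb_le_iff_le_rpow_of_base_lt_one hz hz1 hr0).2 (by rwa [rpow_one])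
  refine ⟨?_, ?_, fun f g hf hg => ⟨?_, ?_, ?_⟩⟩
  · rw [hseminorm, evalAr_zero, norm_zero, zero_rpow hp0.ne']
  · rw [hseminorm, evalAr_one, norm_one, one_rpow]
  · rw [hseminorm, hseminorm, hseminorm, evalAr_mul hf hg hz0 hzr, norm_mul,
      mul_rpow (norm_nonneg _) (norm_nonneg _)]
  · rw [hseminorm, hseminorm, hseminorm, evalAr_add hf hg hzr]
    exact (rpow_le_rpow (norm_nonneg _) (norm_add_le _ _) hp0.le).trans
      (rpow_add_le_add_rpow (norm_nonneg _) (norm_nonneg _) hp0.le hp1)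
  · exact rpow_norm_evalAr_le_normAr hp0 hp1 (rpow_logb hz hz1.ne hr0) hf hzr
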